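/- Let 1 ≤ d < n be integers and let α > d/2 and β > (n−d)/2 satisfy d/(2α) + (n−d)/(2β) < 1. Then the series Σ over pairs (m_I, m_II) with m_I ∈ ℤ^d ∖ {0} and m_II ∈ ℤ^{n−d} ∖ {0} of (‖m_I‖^{2α} + ‖m_II‖^{2β})^{−1} converges, where ‖·‖ is the Euclidean norm. -/

import Mathlib

/-!
Weighted AM–GM with weights `s + t = 1` gives `a ^ s * b ^ t ≤ a + b`, so the summand is at most
`‖m_I‖ ^ (-2αs) * ‖m_II‖ ^ (-2βt)`. The condition `d/(2α) + (n-d)/(2β) < 1` leaves room to choose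
`s, t` with `2αs > d` and `2βt > n - d`, so both factors are summable lattice `p`-series.
-/

/-- Euclidean norm of a vector in `ℝ^m`. -/
noncomputable def euclNorm {m : ℕ} (x : Fin m → ℝ) : ℝ :=
  ‖(EuclideanSpace.equiv (Fin m) ℝ).symm x‖

open Module

theorem summable_norm_sum_intSMul_basis_rpow_neg {E ι : Type*} [NormedAddCommGroup E]
    [NormedSpace ℝ E] [Fintype ι] (b : Basis ι ℝ E) {r : ℝ} (hr : Fintype.card ι < r) :
    Summable fun v : ι → ℤ => ‖∑ i, v i • b i‖ ^ (-r) := by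
  have : FiniteDimensional ℝ E := b.finiteDimensional_of_finite
  have hrank : finrank ℤ (Submodule.span ℤ (Set.range b)) = Fintype.card ι :=
    finrank_eq_card_basis (b.restrictScalars ℤ)
  have h := ZLattice.summable_norm_rpow _ (-r) (by rw [hrank]; linarith)
  rw [← (b.restrictScalars ℤ).equivFun.symm.toEquiv.summable_iff] at h
  refine h.congr fun v => ?_
  simp [Basis.equivFun_symm_apply]

theorem inv_add_le_rpow_neg_mul_rpow_neg {a b s t : ℝ} (ha : 0 < a) (hb : 0 < b)
    (hs : 0 ≤ s) (ht : 0 ≤ t) (hst : s + t = 1) : (a + b)⁻¹ ≤ a ^ (-s) * b ^ (-t) := by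
  rw [Real.rpow_neg ha.le, Real.rpow_neg hb.le, ← mul_inv]
  refine inv_anti₀ (by positivity) ?_
  calc a ^ s * b ^ t ≤ s * a + t * b :=
        Real.geom_mean_le_arith_mean2_weighted hs ht ha.le hb.le hst
    _ ≤ a + b := by nlinarith

theorem exists_lt_lt_add_eq_one {a b : ℝ} (h : a + b < 1) :
    ∃ s t, a < s ∧ b < t ∧ s + t = 1 :=
  ⟨(1 + a - b) / 2, (1 - a + b) / 2, by linarith, by linarith, by ring⟩

theorem euclNorm_nonneg {m : ℕ} (x : Fin m → ℝ) : 0 ≤ euclNorm x := norm_nonneg _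

theorem euclNorm_pos {m : ℕ} {x : Fin m → ℝ} (hx : x ≠ 0) : 0 < euclNorm x :=
  norm_pos_iff.2 fun h => hx (by simpa using congrArg (EuclideanSpace.equiv (Fin m) ℝ) h)

theorem euclNorm_intCast_pos {m : ℕ} {v : Fin m → ℤ} (hv : v ≠ 0) :
    0 < euclNorm fun i => (v i : ℝ) :=
  euclNorm_pos fun h => hv (funext fun i => by simpa using congrFun h i)

theorem euclNorm_intCast_eq_norm_sum {m : ℕ} (v : Fin m → ℤ) :
    euclNorm (fun i => (v i : ℝ)) = ‖∑ i, v i • EuclideanSpace.basisFun (Fin m) ℝ i‖ := by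
  rw [euclNorm]
  congr 1
  ext j
  simp [Pi.single_apply]

theorem summable_euclNorm_intCast_rpow_neg {m : ℕ} {r : ℝ} (hr : (m : ℝ) < r) :
    Summable fun v : Fin m → ℤ => euclNorm (fun i => (v i : ℝ)) ^ (-r) := by
  refine (summable_norm_sum_intSMul_basis_rpow_neg (EuclideanSpace.basisFun (Fin m) ℝ).toBasis
    (r := r) (by rwa [Fintype.card_fin])).congr fun v => ?_
  rw [euclNorm_intCast_eq_norm_sum, OrthonormalBasis.coe_toBasis]

theorem stmt13_general (d m : ℕ) (α β : ℝ)
    (hα : (d : ℝ) / 2 < α) (hβ : (m : ℝ) / 2 < β)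
    (hcond : (d : ℝ) / (2 * α) + (m : ℝ) / (2 * β) < 1) :
    Summable fun p : {p : (Fin d → ℤ) × (Fin m → ℤ) // p.1 ≠ 0 ∧ p.2 ≠ 0} =>
      (euclNorm (fun i => ((p : (Fin d → ℤ) × (Fin m → ℤ)).1 i : ℝ)) ^ (2 * α) +
        euclNorm (fun j => ((p : (Fin d → ℤ) × (Fin m → ℤ)).2 j : ℝ)) ^ (2 * β))⁻¹ := by
  have hα0 : 0 < 2 * α := by linarith [(by positivity : (0 : ℝ) ≤ d / 2)]
  have hβ0 : 0 < 2 * β := by linarith [(by positivity : (0 : ℝ) ≤ m / 2)]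
  obtain ⟨s, t, hs, ht, hst⟩ := exists_lt_lt_add_eq_one hcond
  have hs0 : 0 ≤ s := (by positivity : (0 : ℝ) ≤ d / (2 * α)).trans hs.le
  have ht0 : 0 ≤ t := (by positivity : (0 : ℝ) ≤ m / (2 * β)).trans ht.le
  rw [div_lt_iff₀ hα0] at hs
  rw [div_lt_iff₀ hβ0] at ht
  have hdom := (summable_euclNorm_intCast_rpow_neg (m := d) hs).mul_of_nonneg
    (summable_euclNorm_intCast_rpow_neg (m := m) ht)
    (fun _ => Real.rpow_nonneg (euclNorm_nonneg _) _)
    (fun _ => Real.rpow_nonneg (euclNorm_nonneg _) _)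
  refine (hdom.subtype _).of_nonneg_of_le (fun _ => inv_nonneg.2 (add_nonneg
    (Real.rpow_nonneg (euclNorm_nonneg _) _) (Real.rpow_nonneg (euclNorm_nonneg _) _)))
    fun ⟨⟨v, w⟩, hv, hw⟩ => ?_
  dsimp only at hv hw ⊢
  set N₁ := euclNorm fun i => (v i : ℝ)
  set N₂ := euclNorm fun j => (w j : ℝ)
  have hN₁ : 0 < N₁ := euclNorm_intCast_pos hv
  have hN₂ : 0 < N₂ := euclNorm_intCast_pos hw
  calc (N₁ ^ (2 * α) + N₂ ^ (2 * β))⁻¹ ≤ (N₁ ^ (2 * α)) ^ (-s) * (N₂ ^ (2 * β)) ^ (-t) :=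
        inv_add_le_rpow_neg_mul_rpow_neg (by positivity) (by positivity) hs0 ht0 hst
    _ = N₁ ^ (-(s * (2 * α))) * N₂ ^ (-(t * (2 * β))) := by
        rw [← Real.rpow_mul hN₁.le, ← Real.rpow_mul hN₂.le]
        ring_nf

/-- for `α > d/2`, `β > (n-d)/2` with `d/(2α) + (n-d)/(2β) < 1`, the series
`Σ_{m_I ≠ 0, m_II ≠ 0} (‖m_I‖^(2α) + ‖m_II‖^(2β))⁻¹` over pairs of nonzero integer
vectors converges. -/
theorem stmt13 (d m : ℕ) (hd : 1 ≤ d) (hm : 1 ≤ m) (α β : ℝ)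
    (hα : (d : ℝ) / 2 < α) (hβ : (m : ℝ) / 2 < β)
    (hcond : (d : ℝ) / (2 * α) + (m : ℝ) / (2 * β) < 1) :
    Summable fun p : {p : (Fin d → ℤ) × (Fin m → ℤ) // p.1 ≠ 0 ∧ p.2 ≠ 0} =>
      (euclNorm (fun i => ((p : (Fin d → ℤ) × (Fin m → ℤ)).1 i : ℝ)) ^ (2 * α) +
        euclNorm (fun j => ((p : (Fin d → ℤ) × (Fin m → ℤ)).2 j : ℝ)) ^ (2 * β))⁻¹ :=
  stmt13_general d m α β hα hβ hcond
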